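/- arXiv:2402.16900 — 2 statements merged into one kernel-verified Lean document; each statement's English description precedes it below -/
import Mathlib

section
/- For α > 0, b ∈ ℝ, and s > 0 with s^α > |b|, the Laplace transform of t ↦ E_α(b t^α) equals s^{α−1}/(s^α − b). -/
/-!
Termwise, `∫₀^∞ e^{-st} (b t^α)^k / Γ(αk+1) dt = b^k / s^{αk+1}`, so the Laplace transform is the
geometric series `s⁻¹ ∑ (b / s^α)^k`. Exchanging sum and integral is legitimate because the same
computation with `|b|` in place of `b` bounds the integrals of the absolute values by a convergent
geometric series, as `|b| < s^α`.
-/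

open MeasureTheory Set Real

noncomputable def mittagLefflerTerm (α b : ℝ) (k : ℕ) (t : ℝ) : ℝ :=
  (b * t ^ α) ^ k / Gamma (α * k + 1)

lemma integrableOn_rpow_mul_exp_neg_mul_Ioi {a r : ℝ} (ha : -1 < a) (hr : 0 < r) :
    IntegrableOn (fun t : ℝ => t ^ a * exp (-(r * t))) (Ioi 0) := by
  simpa [rpow_one] using integrableOn_rpow_mul_exp_neg_mul_rpow ha one_pos hr

section

variable {α : ℝ} (b : ℝ) (k : ℕ)

lemma Gamma_mul_natCast_add_one_pos (hα : 0 ≤ α) : 0 < Gamma (α * k + 1) :=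
  Gamma_pos_of_pos (by positivity)

lemma mittagLefflerTerm_of_nonneg {t : ℝ} (ht : 0 ≤ t) :
    mittagLefflerTerm α b k t = b ^ k / Gamma (α * k + 1) * t ^ (α * k) := by
  rw [mittagLefflerTerm, mul_pow, ← rpow_natCast (t ^ α), ← rpow_mul ht]
  ring

lemma abs_mittagLefflerTerm (hα : 0 ≤ α) {t : ℝ} (ht : 0 ≤ t) :
    |mittagLefflerTerm α b k t| = mittagLefflerTerm α |b| k t := by
  rw [mittagLefflerTerm, mittagLefflerTerm, abs_div, abs_pow, abs_mul,
    abs_of_nonneg (rpow_nonneg ht α), abs_of_pos (Gamma_mul_natCast_add_one_pos k hα)]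

variable {s : ℝ} (hα : 0 ≤ α) (hs : 0 < s)
include hα hs

lemma integrableOn_exp_mul_mittagLefflerTerm :
    IntegrableOn (fun t => exp (-s * t) * mittagLefflerTerm α b k t) (Ioi 0) := by
  have hk : -1 < α * k := by linarith [mul_nonneg hα k.cast_nonneg]
  refine IntegrableOn.congr_fun ((integrableOn_rpow_mul_exp_neg_mul_Ioi hk hs).const_mul
    (b ^ k / Gamma (α * k + 1))) (fun t ht => ?_) measurableSet_Ioi
  rw [mittagLefflerTerm_of_nonneg b k (le_of_lt ht), neg_mul]
  ring

lemma integral_exp_mul_mittagLefflerTerm :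
    ∫ t in Ioi 0, exp (-s * t) * mittagLefflerTerm α b k t = s⁻¹ * (b / s ^ α) ^ k := by
  have hterm : ∀ t ∈ Ioi (0 : ℝ), exp (-s * t) * mittagLefflerTerm α b k t =
      b ^ k / Gamma (α * k + 1) * (t ^ (α * k + 1 - 1) * exp (-(s * t))) := fun t ht => by
    rw [mittagLefflerTerm_of_nonneg b k (le_of_lt ht), add_sub_cancel_right, neg_mul]
    ring
  have hpow : (1 / s) ^ (α * k + 1) = s⁻¹ * (s ^ α)⁻¹ ^ k := by
    rw [rpow_add (by positivity), rpow_one, one_div, inv_rpow hs.le, inv_pow,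
      ← rpow_natCast (s ^ α), ← rpow_mul hs.le, mul_comm]
  rw [setIntegral_congr_fun measurableSet_Ioi hterm, integral_const_mul,
    integral_rpow_mul_exp_neg_mul_Ioi (by positivity) hs, hpow,
    div_pow, div_eq_mul_inv (b ^ k), inv_pow]
  field_simp [(Gamma_mul_natCast_add_one_pos k hα).ne']

end

lemma summable_integral_norm_exp_mul_mittagLefflerTerm {α b s : ℝ} (hα : 0 ≤ α) (hs : 0 < s)
    (hb : |b| < s ^ α) :
    Summable fun k : ℕ => ∫ t in Ioi 0, ‖exp (-s * t) * mittagLefflerTerm α b k t‖ := by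
  have hnorm : ∀ k : ℕ, ∫ t in Ioi 0, ‖exp (-s * t) * mittagLefflerTerm α b k t‖ =
      s⁻¹ * (|b| / s ^ α) ^ k := fun k => by
    rw [← integral_exp_mul_mittagLefflerTerm |b| k hα hs]
    refine setIntegral_congr_fun measurableSet_Ioi fun t ht => ?_
    rw [norm_mul, norm_of_nonneg (exp_pos _).le, Real.norm_eq_abs,
      abs_mittagLefflerTerm b k hα (le_of_lt ht)]
  simp_rw [hnorm]
  refine (summable_geometric_of_lt_one (by positivity) ?_).mul_left _
  rwa [div_lt_one (rpow_pos_of_pos hs α)]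

lemma tsum_inv_mul_div_rpow_pow {α b s : ℝ} (hs : 0 < s) (hb : |b| < s ^ α) :
    ∑' k : ℕ, s⁻¹ * (b / s ^ α) ^ k = s ^ (α - 1) / (s ^ α - b) := by
  have hsα : 0 < s ^ α := rpow_pos_of_pos hs α
  have hr : ‖b / s ^ α‖ < 1 := by
    rwa [norm_div, norm_of_nonneg hsα.le, Real.norm_eq_abs, div_lt_one hsα]
  have hne : s ^ α - b ≠ 0 := by linarith [le_abs_self b]
  rw [tsum_mul_left, tsum_geometric_of_norm_lt_one hr, rpow_sub hs, rpow_one]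
  field_simp

/-- For `α > 0`, `b ∈ ℝ` and `s > 0` with `s^α > |b|`, the Laplace transform of
`t ↦ E_α(b t^α)` equals `s^{α-1}/(s^α - b)`. -/
theorem laplace_mittagLeffler (α b s : ℝ) (hα : 0 < α) (hs : 0 < s) (hb : |b| < s ^ α) :
    ∫ t in Set.Ioi (0:ℝ), Real.exp (-s * t) *
        (∑' k : ℕ, (b * t ^ α) ^ k / Real.Gamma (α * k + 1)) =
      s ^ (α - 1) / (s ^ α - b) := by
  calc ∫ t in Ioi 0, exp (-s * t) * ∑' k : ℕ, mittagLefflerTerm α b k t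
      = ∫ t in Ioi 0, ∑' k : ℕ, exp (-s * t) * mittagLefflerTerm α b k t := by
        simp_rw [tsum_mul_left]
    _ = ∑' k : ℕ, ∫ t in Ioi 0, exp (-s * t) * mittagLefflerTerm α b k t :=
        (integral_tsum_of_summable_integral_norm
          (fun k => integrableOn_exp_mul_mittagLefflerTerm b k hα.le hs)
          (summable_integral_norm_exp_mul_mittagLefflerTerm hα.le hs hb)).symm
    _ = ∑' k : ℕ, s⁻¹ * (b / s ^ α) ^ k := by
        simp_rw [integral_exp_mul_mittagLefflerTerm b _ hα.le hs]
    _ = s ^ (α - 1) / (s ^ α - b) := tsum_inv_mul_div_rpow_pow hs hb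
end

section
/- For α > 0, b ≥ 0, and s > 0 with s^α > b, the Laplace transform of t ↦ t^{α−1} E_{α,α}(−b t^α) equals 1/(s^α + b). -/
open MeasureTheory Real Set

/-!
Expanding the Mittag-Leffler function, the `k`-th term of the integrand is
`c ^ k / Γ(α (k + 1))` times `e^{-st} t^{α (k + 1) - 1}`, whose Laplace transform is
`Γ(α (k + 1)) / s^{α (k + 1)}`. The Gamma factors cancel and the termwise transforms form the
geometric series `∑ c ^ k / (s ^ α) ^ (k + 1) = 1 / (s ^ α - c)`. Since `|c| < s ^ α`, the same
computation with `|c|` shows that the integrals of the absolute values of the terms are summable,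
which justifies exchanging the integral and the sum.
-/

lemma integrableOn_exp_neg_mul_mul_rpow_sub_one {p s : ℝ} (hp : 0 < p) (hs : 0 < s) :
    IntegrableOn (fun t : ℝ => exp (-s * t) * t ^ (p - 1)) (Ioi 0) := by
  refine (integrableOn_rpow_mul_exp_neg_mul_rpow (s := p - 1) (by linarith) one_pos hs).congr_fun
    (fun t _ => ?_) measurableSet_Ioi
  simp only [rpow_one, mul_comm]

lemma integral_exp_neg_mul_mul_rpow_sub_one {p s : ℝ} (hp : 0 < p) (hs : 0 < s) :
    ∫ t in Ioi (0 : ℝ), exp (-s * t) * t ^ (p - 1) = Gamma p / s ^ p := by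
  have h := integral_rpow_mul_exp_neg_mul_Ioi hp hs
  simp_rw [← neg_mul, mul_comm (_ ^ (p - 1))] at h
  rw [h, div_rpow zero_le_one hs.le, one_rpow, one_div_mul_eq_div]

lemma tsum_pow_div_pow_succ {c x : ℝ} (hc : |c| < x) :
    ∑' k : ℕ, c ^ k / x ^ (k + 1) = 1 / (x - c) := by
  have hx : 0 < x := (abs_nonneg c).trans_lt hc
  have hr : ‖c / x‖ < 1 := by
    rw [norm_div, norm_eq_abs, norm_eq_abs, abs_of_pos hx, div_lt_one hx]; exact hc
  have hcx : x - c ≠ 0 := by linarith [le_abs_self c]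
  simp_rw [pow_succ, ← div_div, ← div_pow]
  rw [tsum_div_const, tsum_geometric_of_norm_lt_one hr]
  field_simp

section MittagLefflerSeries

variable {α s c t : ℝ} (k : ℕ)

lemma exp_mul_rpow_mul_mittagLeffler_term (ht : 0 < t) :
    exp (-s * t) * (t ^ (α - 1) * ((c * t ^ α) ^ k / Gamma (α * k + α))) =
      c ^ k / Gamma (α * k + α) * (exp (-s * t) * t ^ (α * k + α - 1)) := by
  have hpow : (c * t ^ α) ^ k = c ^ k * t ^ (α * k) := by
    rw [mul_pow, ← rpow_natCast (t ^ α), ← rpow_mul ht.le]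
  have hsplit : t ^ (α * k + α - 1) = t ^ (α - 1) * t ^ (α * k) := by
    rw [← rpow_add ht]; ring_nf
  rw [hpow, hsplit]; ring

lemma norm_exp_mul_rpow_mul_mittagLeffler_term (hα : 0 < α) (ht : 0 < t) :
    ‖exp (-s * t) * (t ^ (α - 1) * ((c * t ^ α) ^ k / Gamma (α * k + α)))‖ =
      exp (-s * t) * (t ^ (α - 1) * ((|c| * t ^ α) ^ k / Gamma (α * k + α))) := by
  have hΓ : 0 < Gamma (α * k + α) := Gamma_pos_of_pos (by positivity)
  rw [norm_eq_abs, abs_mul, abs_mul, abs_div, abs_pow, abs_mul, abs_exp,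
    abs_of_pos (rpow_pos_of_pos ht _), abs_of_pos (rpow_pos_of_pos ht _), abs_of_pos hΓ]

variable (hα : 0 < α) (hs : 0 < s)
include hα hs

lemma integrableOn_exp_mul_rpow_mul_mittagLeffler_term :
    IntegrableOn (fun t : ℝ =>
      exp (-s * t) * (t ^ (α - 1) * ((c * t ^ α) ^ k / Gamma (α * k + α)))) (Ioi 0) :=
  IntegrableOn.congr_fun
    ((integrableOn_exp_neg_mul_mul_rpow_sub_one (by positivity) hs).const_mul _)
    (fun _ ht => (exp_mul_rpow_mul_mittagLeffler_term k ht).symm) measurableSet_Ioi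

lemma integral_exp_mul_rpow_mul_mittagLeffler_term :
    ∫ t in Ioi (0 : ℝ),
        exp (-s * t) * (t ^ (α - 1) * ((c * t ^ α) ^ k / Gamma (α * k + α))) =
      c ^ k / (s ^ α) ^ (k + 1) := by
  have hp : 0 < α * k + α := by positivity
  have hspow : s ^ (α * k + α) = (s ^ α) ^ (k + 1) := by
    rw [← rpow_natCast, ← rpow_mul hs.le]; push_cast; ring_nf
  rw [setIntegral_congr_fun measurableSet_Ioi
      (fun _ ht => exp_mul_rpow_mul_mittagLeffler_term k ht), integral_const_mul,
    integral_exp_neg_mul_mul_rpow_sub_one hp hs, hspow]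
  field_simp [(Gamma_pos_of_pos hp).ne']

theorem integral_exp_mul_rpow_mul_mittagLeffler (hc : |c| < s ^ α) :
    ∫ t in Ioi (0 : ℝ), exp (-s * t) *
        (t ^ (α - 1) * ∑' k : ℕ, (c * t ^ α) ^ k / Gamma (α * k + α)) =
      1 / (s ^ α - c) := by
  have hsum_norm : Summable fun k : ℕ => ∫ t in Ioi (0 : ℝ),
      ‖exp (-s * t) * (t ^ (α - 1) * ((c * t ^ α) ^ k / Gamma (α * k + α)))‖ := by
    have hgeom : Summable fun k : ℕ => |c| ^ k / (s ^ α) ^ (k + 1) := by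
      simp_rw [pow_succ, ← div_div, ← div_pow]
      refine (summable_geometric_of_lt_one (by positivity) ?_).div_const _
      rwa [div_lt_one (rpow_pos_of_pos hs α)]
    refine hgeom.congr fun k => ?_
    rw [← integral_exp_mul_rpow_mul_mittagLeffler_term k hα hs]
    exact setIntegral_congr_fun measurableSet_Ioi
      (fun _ ht => (norm_exp_mul_rpow_mul_mittagLeffler_term k hα ht).symm)
  simp_rw [← tsum_mul_left]
  rw [← integral_tsum_of_summable_integral_norm
    (fun k => integrableOn_exp_mul_rpow_mul_mittagLeffler_term k hα hs) hsum_norm]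
  simp_rw [integral_exp_mul_rpow_mul_mittagLeffler_term _ hα hs]
  exact tsum_pow_div_pow_succ hc

end MittagLefflerSeries

/-- For `α > 0`, `b ≥ 0` and `s > 0` with `s^α > b`, the Laplace transform of
`t ↦ t^{α-1} E_{α,α}(-b t^α)` equals `1/(s^α + b)`. -/
theorem laplace_mittagLeffler_two (α b s : ℝ) (hα : 0 < α) (hb : 0 ≤ b) (hs : 0 < s)
    (hbs : b < s ^ α) :
    ∫ t in Set.Ioi (0:ℝ), Real.exp (-s * t) *
        (t ^ (α - 1) * ∑' k : ℕ, (-b * t ^ α) ^ k / Real.Gamma (α * k + α)) =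
      1 / (s ^ α + b) := by
  have hc : |-b| < s ^ α := by rwa [abs_neg, abs_of_nonneg hb]
  rw [integral_exp_mul_rpow_mul_mittagLeffler hα hs hc, sub_neg_eq_add]
end
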